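/- Let V_1 ⊊ ... ⊊ V_d be a flag with dim V_i = i and V_i ⊆ F_{α_{d+1-i}+i} for all i, and suppose moreover that V_d lies in the open Schubert cell S(α)°. Then V_i = V_d ∩ F_{α_{d+1-i}+i} for every i. In particular, the flag is uniquely determined by V_d, so the Kempf–Laksov resolution is bijective over the open cell. -/
import Mathlib


open Module

/-- `stdFlag N k` is the subspace `F_k` of `ℂ^N` spanned by the first `k`
standard basis vectors. -/
noncomputable def stdFlag (N k : ℕ) : Submodule ℂ (Fin N → ℂ) :=
  Submodule.span ℂ {v | ∃ i : Fin N, (i : ℕ) < k ∧ v = Pi.basisFun ℂ (Fin N) i}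

/-- Membership in the Schubert variety `S(α)` in the Grassmannian of `d`-planes of
`ℂ^{n+d}`: a `d`-plane `V` lies in `S(α)` iff `dim (V ∩ F_{α_{d+1-i}+i}) ≥ i` for
`i = 1, …, d`.  Here `α : Fin d → ℕ` is the partition in zero-based indexing
(`α 0 = α_1 ≥ ⋯ ≥ α (d-1) = α_d`), and for `i : Fin d` (representing the index
`i+1 ∈ {1,…,d}`) the relevant flag subspace is `F_{α i.rev + (i+1)}`. -/
def memSchubert (n d : ℕ) (α : Fin d → ℕ) (V : Submodule ℂ (Fin (n + d) → ℂ)) : Prop :=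
  ∀ i : Fin d, (i : ℕ) + 1 ≤ Module.finrank ℂ ↥(V ⊓ stdFlag (n + d) (α i.rev + (i : ℕ) + 1))


/-- Membership in the open Schubert cell `S(α)°`. -/
def memSchubertCell (n d : ℕ) (α : Fin d → ℕ) (V : Submodule ℂ (Fin (n + d) → ℂ)) : Prop :=
  ∀ i : Fin d,
    Module.finrank ℂ ↥(V ⊓ stdFlag (n + d) (α i.rev + (i : ℕ) + 1)) = (i : ℕ) + 1 ∧
    Module.finrank ℂ ↥(V ⊓ stdFlag (n + d) (α i.rev + (i : ℕ))) = (i : ℕ)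

/-- If `V_1 ⊊ ⋯ ⊊ V_d` is a flag with `dim V_i = i` and `V_i ⊆ F_{α_{d+1-i}+i}`,
and if moreover `V_d` lies in the open Schubert cell `S(α)°`, then
`V_i = V_d ∩ F_{α_{d+1-i}+i}` for every `i`: the flag is uniquely determined by
`V_d`, so the Kempf–Laksov resolution is bijective over the open cell. -/
theorem flag_determined_over_cell (n d : ℕ) (hd : 0 < d) (α : Fin d → ℕ)
    (hα : Antitone α) (hαn : ∀ i, α i ≤ n)
    (V : Fin d → Submodule ℂ (Fin (n + d) → ℂ))
    (hmono : StrictMono V)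
    (hdim : ∀ i : Fin d, Module.finrank ℂ ↥(V i) = (i : ℕ) + 1)
    (hsub : ∀ i : Fin d, V i ≤ stdFlag (n + d) (α i.rev + (i : ℕ) + 1))
    (hcell : memSchubertCell n d α (V ⟨d - 1, by omega⟩)) :
    ∀ i : Fin d, V i = V ⟨d - 1, by omega⟩ ⊓ stdFlag (n + d) (α i.rev + (i : ℕ) + 1) := by
  intro i
  have hle : V i ≤ V ⟨d - 1, by omega⟩ ⊓ stdFlag (n + d) (α i.rev + (i : ℕ) + 1) := by
    refine le_inf ?_ (hsub i)
    exact hmono.monotone (by exact Fin.mk_le_of_le_val (by have := i.isLt; simp; omega))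
  refine Submodule.eq_of_le_of_finrank_eq hle ?_
  rw [hdim i, (hcell i).1]
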